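/- K{{t}} with the higher topology is not barrelled: the ring of integers 𝒪{{t}} = Σ_{i∈ℤ} 𝒪 t^i is an 𝒪-lattice in K{{t}} that is closed for the higher topology but is not open. -/

import Mathlib

/-!
Common setting: `K` is a characteristic-zero local field (a finite extension of `ℚ_p`)
with ring of integers `𝒪 = {c : K | ‖c‖ ≤ 1}`, maximal ideal `𝔭 = {c : K | ‖c‖ < 1}`,
residue field of cardinality `q` and the absolute value normalised by `‖π‖ = q⁻¹`.
We formalise the two-dimensional local fields `K((t))` (as `LaurentSeries K`) and
`K{{t}}` (as the submodule `mixedCarrier K` of `ℤ → K`), their higher topologies, and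
the relevant functional-analytic notions (lattices, seminorms, boundedness,
c-compactness, compactoidness, completeness for nets, duality).
-/

open Filter Topology Set Pointwise
open scoped Classical

noncomputable section

namespace TwoDimLF

variable (K : Type) [NontriviallyNormedField K]

/-- `K` is a characteristic-zero nonarchimedean local field: the norm is nonarchimedean,
takes the values `q^ℤ` on `K˟` (with a uniformizer of norm `q⁻¹`), `K` is complete, locally
compact, of characteristic zero, and the residue field has exactly `q` elements. -/
structure IsCharZeroLocalField (q : ℕ) : Prop where
  nonarch : ∀ x y : K, ‖x + y‖ ≤ max ‖x‖ ‖y‖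
  one_lt_q : 1 < q
  norm_values : ∀ x : K, x ≠ 0 → ∃ n : ℤ, ‖x‖ = (q : ℝ) ^ (-n)
  exists_uniformizer : ∃ π : K, ‖π‖ = ((q : ℝ))⁻¹
  charZero : CharZero K
  locallyCompact : LocallyCompactSpace K
  complete : CompleteSpace K
  residue_card : ∃ s : Finset K, s.card = q ∧
    ∀ x : K, ‖x‖ ≤ 1 → ∃! y, y ∈ s ∧ ‖x - y‖ < 1

/-- The fractional ideal `𝔭^n ⊆ K` for `n ∈ ℤ ∪ {-∞}`, with the convention `𝔭^(-∞) = K`. -/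
def pB (q : ℕ) (n : WithBot ℤ) : Set K :=
  WithBot.recBotCoe Set.univ (fun m : ℤ => {x : K | ‖x‖ ≤ (q : ℝ) ^ (-m)}) n

/-- The fractional ideal `𝔭^n ⊆ K` for `n ∈ ℤ ∪ {∞}`, with the convention `𝔭^∞ = {0}`. -/
def pT (q : ℕ) (n : WithTop ℤ) : Set K :=
  WithTop.recTopCoe {0} (fun m : ℤ => {x : K | ‖x‖ ≤ (q : ℝ) ^ (-m)}) n

/-- The fractional ideal `𝔭^n ⊆ K` for `n ∈ ℤ ∪ {±∞}`. -/
def pE (q : ℕ) (n : WithBot (WithTop ℤ)) : Set K :=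
  WithBot.recBotCoe Set.univ (fun m : WithTop ℤ => pT K q m) n

/-- `q ^ n ∈ ℝ` for `n ∈ ℤ ∪ {-∞}`, with the convention `q^(-∞) = 0`. -/
def qpow (q : ℕ) (n : WithBot ℤ) : ℝ :=
  WithBot.recBotCoe 0 (fun m : ℤ => (q : ℝ) ^ m) n

/-- `1 - k` for `k ∈ ℤ ∪ {±∞}` (so `1 - (±∞) = ∓∞`). -/
def oneSubE : WithBot (WithTop ℤ) → WithBot (WithTop ℤ) :=
  WithBot.recBotCoe ((⊤ : WithTop ℤ) : WithBot (WithTop ℤ))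
    (WithTop.recTopCoe (⊥ : WithBot (WithTop ℤ))
      (fun z : ℤ => (((1 - z : ℤ) : WithTop ℤ) : WithBot (WithTop ℤ))))

section LCS

variable {V : Type} [AddCommGroup V] [Module K V]

/-- `S` is an `𝒪`-submodule of the `K`-vector space `V`, where `𝒪 = {c : K | ‖c‖ ≤ 1}`
is the ring of integers of `K`. -/
def IsOSubmodule (S : Set V) : Prop :=
  (0 : V) ∈ S ∧ (∀ x ∈ S, ∀ y ∈ S, x + y ∈ S) ∧
    ∀ c : K, ‖c‖ ≤ 1 → ∀ x ∈ S, c • x ∈ S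

/-- `S` is an `𝒪`-lattice in `V`: an `𝒪`-submodule such that every vector is carried
into `S` by some nonzero scalar. -/
def IsLatticeSet (S : Set V) : Prop :=
  IsOSubmodule K S ∧ ∀ v : V, ∃ a : K, a ≠ 0 ∧ a • v ∈ S

/-- A (nonarchimedean) seminorm on the `K`-vector space `V`. -/
def IsSeminorm (N : V → ℝ) : Prop :=
  (∀ (c : K) (v : V), N (c • v) = ‖c‖ * N v) ∧ ∀ v w : V, N (v + w) ≤ max (N v) (N w)

/-- The gauge seminorm of a lattice `Λ ⊆ V`: `‖v‖_Λ = inf {‖a‖ : v ∈ aΛ}`. -/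
def gaugeSeminorm (Λ : Set V) (v : V) : ℝ :=
  sInf {r : ℝ | ∃ a : K, v ∈ a • Λ ∧ r = ‖a‖}

/-- The group topology on `W` determined by a family `B` of neighbourhoods of zero:
neighbourhoods of `x` are generated by the translates `x + U`, `U ∈ B`. -/
def addTopologyOf {W : Type} [AddCommGroup W] (B : Set (Set W)) : TopologicalSpace W :=
  TopologicalSpace.mkOfNhds fun x => Filter.map (fun v => x + v) (⨅ U ∈ B, Filter.principal U)

/-- `B` is (Von-Neumann) bounded for the locally convex topology `τ`: every open lattice
absorbs it. -/
def IsVNBounded (τ : TopologicalSpace V) (B : Set V) : Prop :=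
  ∀ Λ : Set V, IsLatticeSet K Λ → IsOpen[τ] Λ → ∃ a : K, B ⊆ a • Λ

/-- The `𝒪`-submodule `A ⊆ V` is c-compact: for every decreasing filtered family of open
lattices `L i`, the canonical map `A → lim A/(L i ∩ A)` is surjective (phrased via
compatible families of representatives). -/
def IsCCompact (τ : TopologicalSpace V) (A : Set V) : Prop :=
  ∀ (ι : Type) (L : ι → Set V),
    (∀ i, IsLatticeSet K (L i) ∧ IsOpen[τ] (L i)) →
    (∀ i j, ∃ k, L k ⊆ L i ∧ L k ⊆ L j) →
    ∀ x : ι → V, (∀ i, x i ∈ A) →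
      (∀ i j, L j ⊆ L i → x j - x i ∈ L i) →
      ∃ a ∈ A, ∀ i, a - x i ∈ L i

/-- The `𝒪`-submodule `A ⊆ V` is compactoid: for every open lattice `Λ` there are finitely
many vectors `v₁, …, v_m ∈ V` with `A ⊆ Λ + 𝒪v₁ + ⋯ + 𝒪v_m`. -/
def IsCompactoid (τ : TopologicalSpace V) (A : Set V) : Prop :=
  ∀ Λ : Set V, IsLatticeSet K Λ → IsOpen[τ] Λ →
    ∃ (m : ℕ) (v : Fin m → V),
      A ⊆ {u : V | ∃ l ∈ Λ, ∃ c : Fin m → K, (∀ j, ‖c j‖ ≤ 1) ∧ u = l + ∑ j, c j • v j}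

/-- `A ⊆ V` is complete: every Cauchy net with values in `A` converges to a point of `A`
(for the topology `τ`). -/
def IsNetComplete (τ : TopologicalSpace V) (A : Set V) : Prop :=
  ∀ (ι : Type) [Preorder ι] [Nonempty ι],
    (∀ i j : ι, ∃ k, i ≤ k ∧ j ≤ k) →
    ∀ x : ι → V, (∀ i, x i ∈ A) →
      (∀ U ∈ @nhds V τ 0, ∃ i0, ∀ j ≥ i0, ∀ k ≥ i0, x j - x k ∈ U) →
      ∃ a ∈ A, Filter.Tendsto x Filter.atTop (@nhds V τ a)

/-- `τ` makes `V` a locally convex topological `K`-vector space: it is a vector-space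
topology whose filter of neighbourhoods of zero admits a basis of lattices. -/
def IsLCTVS (τ : TopologicalSpace V) : Prop :=
  @IsTopologicalAddGroup V τ _ ∧ @ContinuousSMul K V _ _ τ ∧
    ∀ S ∈ @nhds V τ 0, ∃ Λ : Set V, IsLatticeSet K Λ ∧ Λ ∈ @nhds V τ 0 ∧ Λ ⊆ S

/-- The topological dual of `(V, τ)`: continuous `K`-linear forms, as a set of functions. -/
def dualSet (τ : TopologicalSpace V) : Set (V → K) :=
  {l | IsLinearMap K l ∧ @Continuous V K τ _ l}

/-- Basic neighbourhoods of zero for the `c`-topology on `V → K`: uniform convergence on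
compactoid `𝒪`-submodules. -/
def cTopBasic (τ : TopologicalSpace V) : Set (Set (V → K)) :=
  {S | ∃ (B : Set V) (ε : ℝ), IsOSubmodule K B ∧ IsCompactoid K τ B ∧ 0 < ε ∧
    S = {l : V → K | ∀ x ∈ B, ‖l x‖ ≤ ε}}

/-- The `c`-topology (uniform convergence on compactoid `𝒪`-submodules) on `V → K`. -/
def cTop (τ : TopologicalSpace V) : TopologicalSpace (V → K) :=
  addTopologyOf (cTopBasic K τ)

/-- The pseudo-polar `A^p = {l ∈ V' : |l(v)| < 1 for all v ∈ A}`. -/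
def pseudoPolar (τ : TopologicalSpace V) (A : Set V) : Set (V → K) :=
  {l | l ∈ dualSet K τ ∧ ∀ v ∈ A, ‖l v‖ < 1}

/-- The pseudo-bipolar `A^{pp} = {v ∈ V : |l(v)| < 1 for all l ∈ A^p}`. -/
def pseudoBipolar (τ : TopologicalSpace V) (A : Set V) : Set V :=
  {v | ∀ l ∈ pseudoPolar K τ A, ‖l v‖ < 1}

end LCS

/-! ### The equal characteristic field `K((t))` -/

/-- Basic neighbourhoods of zero for the higher topology on `K((t))`:
`Σ U_i t^i` where each `U_i` is an open neighbourhood of `0` in `K` and `U_i = K` for all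
sufficiently large `i`. -/
def laurentBasic : Set (Set (LaurentSeries K)) :=
  {S | ∃ U : ℤ → Set K, (∀ i, IsOpen (U i) ∧ (0 : K) ∈ U i) ∧
    (∃ N : ℤ, ∀ i, N ≤ i → U i = Set.univ) ∧
    S = {f : LaurentSeries K | ∀ i, f.coeff i ∈ U i}}

/-- The higher topology on `K((t))`. -/
def laurentTop : TopologicalSpace (LaurentSeries K) := addTopologyOf (laurentBasic K)

/-- `Λ = Σ_{i∈ℤ} 𝔭^{n_i} t^i ⊆ K((t))` for a sequence `(n_i) ⊆ ℤ ∪ {-∞}`. -/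
def laurentLambda (q : ℕ) (n : ℤ → WithBot ℤ) : Set (LaurentSeries K) :=
  {f | ∀ i, f.coeff i ∈ pB K q (n i)}

/-- `B = Σ_{i∈ℤ} 𝔭^{k_i} t^i ⊆ K((t))` for a sequence `(k_i) ⊆ ℤ ∪ {∞}`. -/
def laurentPT (q : ℕ) (k : ℤ → WithTop ℤ) : Set (LaurentSeries K) :=
  {f | ∀ i, f.coeff i ∈ pT K q (k i)}

/-- `A = Σ_{i∈ℤ} 𝔭^{k_i} t^i ⊆ K((t))` for a sequence `(k_i) ⊆ ℤ ∪ {±∞}`. -/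
def laurentPE (q : ℕ) (k : ℤ → WithBot (WithTop ℤ)) : Set (LaurentSeries K) :=
  {f | ∀ i, f.coeff i ∈ pE K q (k i)}

/-- The admissible seminorm `‖Σ x_i t^i‖ = max_i ‖x_i‖ q^{n_i}` on `K((t))`. -/
def laurentSeminorm (q : ℕ) (n : ℤ → WithBot ℤ) (f : LaurentSeries K) : ℝ :=
  sSup {r : ℝ | ∃ i : ℤ, r = ‖f.coeff i‖ * qpow q (n i)}

/-- The ring of integers `K[[t]] ⊆ K((t))`. -/
def laurentIntegers : Set (LaurentSeries K) := {f | ∀ i, i < 0 → f.coeff i = 0}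

/-- The rank-two ring of integers `𝒪 + tK[[t]] ⊆ K((t))`. -/
def laurentRankTwo : Set (LaurentSeries K) :=
  {f | (∀ i, i < 0 → f.coeff i = 0) ∧ ‖f.coeff 0‖ ≤ 1}

/-- The pairing `γ(x)(y) = π₀(xy) = Σ_i x_i y_{-i}` on `K((t))`. -/
def laurentPairing (x y : LaurentSeries K) : K := ∑' i : ℤ, x.coeff i * y.coeff (-i)

/-! ### The mixed characteristic field `K{{t}}` -/

/-- The underlying `K`-vector space of `K{{t}}`: functions `x : ℤ → K` (coefficients of
`Σ x_i t^i`) with `inf_i v_K(x_i) > -∞` (i.e. bounded norms) and `x_i → 0` as `i → -∞`. -/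
def mixedCarrier : Submodule K (ℤ → K) where
  carrier := {x | (∃ C : ℝ, ∀ i, ‖x i‖ ≤ C) ∧ Filter.Tendsto x Filter.atBot (nhds (0 : K))}
  zero_mem' := ⟨⟨0, fun i => by simp⟩, tendsto_const_nhds⟩
  add_mem' := by
    rintro x y ⟨⟨C, hC⟩, hx⟩ ⟨⟨D, hD⟩, hy⟩
    refine ⟨⟨C + D, fun i => (norm_add_le _ _).trans (add_le_add (hC i) (hD i))⟩, ?_⟩
    have h2 := hx.add hy
    rw [add_zero] at h2
    exact h2
  smul_mem' := by
    rintro c x ⟨⟨C, hC⟩, hx⟩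
    refine ⟨⟨‖c‖ * C, fun i => ?_⟩, ?_⟩
    · have h : ‖(c • x) i‖ = ‖c‖ * ‖x i‖ := by simp [norm_smul]
      rw [h]
      exact mul_le_mul_of_nonneg_left (hC i) (norm_nonneg c)
    · have h2 := hx.const_smul c
      rw [smul_zero] at h2
      exact h2

/-- The field `K{{t}}`, as a `K`-vector space. -/
abbrev Mt := ↥(mixedCarrier K)

/-- Basic neighbourhoods of zero for the higher topology on `K{{t}}`:
`Σ V_i t^i` where each `V_i` is an open neighbourhood of `0` in `K`, some `𝔭^c` is
contained in every `V_i`, and for every `l` eventually `𝔭^l ⊆ V_i`. -/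
def mixedBasic (q : ℕ) : Set (Set (Mt K)) :=
  {S | ∃ Vs : ℤ → Set K, (∀ i, IsOpen (Vs i) ∧ (0 : K) ∈ Vs i) ∧
    (∃ c : ℤ, ∀ i, {x : K | ‖x‖ ≤ (q : ℝ) ^ (-c)} ⊆ Vs i) ∧
    (∀ l : ℤ, ∃ i0 : ℤ, ∀ i, i0 ≤ i → {x : K | ‖x‖ ≤ (q : ℝ) ^ (-l)} ⊆ Vs i) ∧
    S = {f : Mt K | ∀ i, f.1 i ∈ Vs i}}

/-- The higher topology on `K{{t}}`. -/
def mixedTop (q : ℕ) : TopologicalSpace (Mt K) := addTopologyOf (mixedBasic K q)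

/-- `Λ = Σ_{i∈ℤ} 𝔭^{n_i} t^i ⊆ K{{t}}` for a sequence `(n_i) ⊆ ℤ ∪ {-∞}`. -/
def mixedLambda (q : ℕ) (n : ℤ → WithBot ℤ) : Set (Mt K) :=
  {f | ∀ i, f.1 i ∈ pB K q (n i)}

/-- `B = Σ_{i∈ℤ} 𝔭^{k_i} t^i ⊆ K{{t}}` for a sequence `(k_i) ⊆ ℤ ∪ {∞}`. -/
def mixedPT (q : ℕ) (k : ℤ → WithTop ℤ) : Set (Mt K) :=
  {f | ∀ i, f.1 i ∈ pT K q (k i)}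

/-- `A = Σ_{i∈ℤ} 𝔭^{k_i} t^i ⊆ K{{t}}` for a sequence `(k_i) ⊆ ℤ ∪ {±∞}`. -/
def mixedPE (q : ℕ) (k : ℤ → WithBot (WithTop ℤ)) : Set (Mt K) :=
  {f | ∀ i, f.1 i ∈ pE K q (k i)}

/-- The admissible seminorm `‖Σ x_i t^i‖ = sup_i ‖x_i‖ q^{n_i}` on `K{{t}}`. -/
def mixedSeminorm (q : ℕ) (n : ℤ → WithBot ℤ) (f : Mt K) : ℝ :=
  sSup {r : ℝ | ∃ i : ℤ, r = ‖f.1 i‖ * qpow q (n i)}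

/-- The ring of integers `𝒪{{t}} ⊆ K{{t}}`. -/
def mixedIntegers : Set (Mt K) := {f | ∀ i, ‖f.1 i‖ ≤ 1}

/-- The rank-two ring of integers `Σ_{i<0} 𝔭 t^i + Σ_{i≥0} 𝒪 t^i ⊆ K{{t}}`. -/
def mixedRankTwo (q : ℕ) : Set (Mt K) :=
  {f | (∀ i : ℤ, i < 0 → ‖f.1 i‖ ≤ ((q : ℝ))⁻¹) ∧ ∀ i : ℤ, 0 ≤ i → ‖f.1 i‖ ≤ 1}

/-- The monomial `t^i ∈ K{{t}}`. -/
def mixedT (i : ℤ) : Mt K :=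
  ⟨fun j => if j = i then 1 else 0,
    ⟨⟨1, fun j => by by_cases h : j = i <;> simp [h]⟩, by
      refine (tendsto_const_nhds : Filter.Tendsto (fun _ : ℤ => (0 : K))
        Filter.atBot (nhds 0)).congr' ?_
      filter_upwards [Filter.eventually_le_atBot (i - 1)] with j hj
      have h : j ≠ i := by omega
      simp [h]⟩⟩

/-- Coefficients of the product of two elements of `K{{t}}` (Cauchy product). -/
def mixedMulCoeff (x y : Mt K) : ℤ → K := fun k => ∑' i : ℤ, x.1 i * y.1 (k - i)

/-- Multiplication on `K{{t}}`. -/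
def mixedMul (x y : Mt K) : Mt K :=
  if h : mixedMulCoeff K x y ∈ mixedCarrier K then ⟨_, h⟩ else 0

/-- The pairing `γ(x)(y) = π₀(xy) = Σ_i x_i y_{-i}` on `K{{t}}`. -/
def mixedPairing (x y : Mt K) : K := ∑' i : ℤ, x.1 i * y.1 (-i)

/-!
A basic neighbourhood `Σ V_i t^i` of zero only restricts finitely many coefficients to
lie in `𝒪`: for every `l` it contains `𝔭^l t^i` once `i` is large, so it contains `x t^i` with
`‖x‖ > 1`, and `𝒪{{t}}` is not open. On the other hand, if some coefficient of `f` has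
norm `> 1`, then by the ultrametric inequality so does the same coefficient of every point of
a neighbourhood of `f` that constrains only that coefficient; hence `𝒪{{t}}` is closed.
-/

section AddTopologyOf

variable {W : Type} [AddCommGroup W] {B : Set (Set W)} {s : Set W}

lemma isOpen_addTopologyOf_of_forall (h : ∀ x ∈ s, ∃ U ∈ B, ∀ u ∈ U, x + u ∈ s) :
    IsOpen[addTopologyOf B] s := by
  intro x hx
  obtain ⟨U, hUB, hU⟩ := h x hx
  exact Filter.mem_map.2 <| Filter.mem_of_superset
    (Filter.mem_iInf_of_mem U (Filter.mem_iInf_of_mem hUB (Filter.mem_principal_self U))) hU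

lemma exists_subset_of_isOpen_addTopologyOf (hne : B.Nonempty) (hdir : DirectedOn (· ⊇ ·) B)
    (hs : IsOpen[addTopologyOf B] s) (h0 : (0 : W) ∈ s) : ∃ U ∈ B, U ⊆ s := by
  have hmem : s ∈ ⨅ U ∈ B, Filter.principal U := by
    simpa using Filter.mem_map.1 (hs 0 h0)
  exact (Filter.hasBasis_biInf_principal (s := id) hdir hne).mem_iff.1 hmem

end AddTopologyOf

lemma univ_mem_mixedBasic (q : ℕ) : (Set.univ : Set (Mt K)) ∈ mixedBasic K q :=
  ⟨fun _ => Set.univ, fun _ => ⟨isOpen_univ, Set.mem_univ _⟩,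
    ⟨0, fun _ => Set.subset_univ _⟩, fun _ => ⟨0, fun _ _ => Set.subset_univ _⟩, by simp⟩

lemma inter_mem_mixedBasic {q : ℕ} (hq : 1 ≤ q) {U V : Set (Mt K)}
    (hU : U ∈ mixedBasic K q) (hV : V ∈ mixedBasic K q) : U ∩ V ∈ mixedBasic K q := by
  obtain ⟨Vs, hVs, ⟨c, hc⟩, hVs_ev, rfl⟩ := hU
  obtain ⟨Ws, hWs, ⟨d, hd⟩, hWs_ev, rfl⟩ := hV
  have ball_mono : ∀ {e e' : ℤ}, e ≤ e' →
      {x : K | ‖x‖ ≤ (q : ℝ) ^ (-e')} ⊆ {x : K | ‖x‖ ≤ (q : ℝ) ^ (-e)} := fun he x hx =>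
    Set.mem_ofPred.2 <| hx.trans (zpow_le_zpow_right₀ (Nat.one_le_cast.2 hq) (neg_le_neg he))
  refine ⟨fun i => Vs i ∩ Ws i, fun i => ⟨(hVs i).1.inter (hWs i).1, (hVs i).2, (hWs i).2⟩,
    ⟨max c d, fun i => Set.subset_inter ((ball_mono (le_max_left c d)).trans (hc i))
      ((ball_mono (le_max_right c d)).trans (hd i))⟩, fun l => ?_, ?_⟩
  · obtain ⟨i₁, h₁⟩ := hVs_ev l
    obtain ⟨i₂, h₂⟩ := hWs_ev l
    exact ⟨max i₁ i₂, fun i hi => Set.subset_inter (h₁ i ((le_max_left _ _).trans hi))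
      (h₂ i ((le_max_right _ _).trans hi))⟩
  · ext f
    simp only [Set.mem_ofPred_eq, Set.mem_inter_iff, forall_and]

lemma directedOn_mixedBasic {q : ℕ} (hq : 1 ≤ q) : DirectedOn (· ⊇ ·) (mixedBasic K q) :=
  fun U hU V hV => ⟨U ∩ V, inter_mem_mixedBasic K hq hU hV, Set.inter_subset_left,
    Set.inter_subset_right⟩

lemma setOf_norm_coeff_lt_mem_mixedBasic (q : ℕ) (i : ℤ) {r : ℝ} (hr : 1 < r) :
    {f : Mt K | ‖f.1 i‖ < r} ∈ mixedBasic K q := by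
  refine ⟨fun j => if j = i then {x : K | ‖x‖ < r} else Set.univ, fun j => ?_,
    ⟨0, fun j => ?_⟩, fun _ => ⟨i + 1, fun j hj => ?_⟩, ?_⟩
  · dsimp only
    split_ifs
    · exact ⟨isOpen_lt continuous_norm continuous_const, by simpa using one_pos.trans hr⟩
    · exact ⟨isOpen_univ, Set.mem_univ _⟩
  · dsimp only
    split_ifs
    · intro x hx
      exact lt_of_le_of_lt (by simpa using hx) hr
    · exact Set.subset_univ _
  · simp [show j ≠ i by omega]
  · ext f
    constructor
    · intro hf j
      dsimp only
      split_ifs with h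
      · exact h ▸ hf
      · exact Set.mem_univ _
    · intro hf
      simpa using hf i

lemma isLatticeSet_mixedIntegers [IsUltrametricDist K] : IsLatticeSet K (mixedIntegers K) := by
  refine ⟨⟨fun i => by simp, fun x hx y hy i => ?_, fun c hc x hx i => ?_⟩, fun v => ?_⟩
  · exact (IsUltrametricDist.norm_add_le_max (x.1 i) (y.1 i)).trans (max_le (hx i) (hy i))
  · change ‖c * x.1 i‖ ≤ 1
    rw [norm_mul]
    exact mul_le_one₀ hc (norm_nonneg _) (hx i)
  · obtain ⟨⟨C, hC⟩, -⟩ := v.2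
    have hC' : 0 < |C| + 1 := by positivity
    obtain ⟨a, ha₀, ha⟩ := NormedField.exists_norm_lt K (inv_pos.2 hC')
    refine ⟨a, norm_pos_iff.1 ha₀, fun i => ?_⟩
    change ‖a * v.1 i‖ ≤ 1
    rw [norm_mul]
    have hv : ‖v.1 i‖ ≤ |C| + 1 := by linarith [hC i, le_abs_self C]
    calc ‖a‖ * ‖v.1 i‖ ≤ (|C| + 1)⁻¹ * (|C| + 1) := by gcongr
      _ = 1 := inv_mul_cancel₀ hC'.ne'

lemma isClosed_mixedIntegers [IsUltrametricDist K] (q : ℕ) :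
    IsClosed[mixedTop K q] (mixedIntegers K) := by
  refine @IsClosed.mk _ (mixedTop K q) _ (isOpen_addTopologyOf_of_forall fun f hf => ?_)
  obtain ⟨i, hi⟩ : ∃ i, 1 < ‖f.1 i‖ := by simpa [mixedIntegers] using hf
  refine ⟨_, setOf_norm_coeff_lt_mem_mixedBasic K q i hi, fun u hu => ?_⟩
  have hfu : ‖f.1 i + u.1 i‖ = ‖f.1 i‖ := by
    rw [IsUltrametricDist.norm_add_eq_max_of_norm_ne_norm (ne_of_gt hu), max_eq_left hu.le]
  simpa [mixedIntegers] using ⟨i, hfu ▸ hi⟩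

lemma not_isOpen_mixedIntegers {q : ℕ} (hq : 1 < q) :
    ¬ IsOpen[mixedTop K q] (mixedIntegers K) := by
  intro hopen
  obtain ⟨U, ⟨Vs, hVs, -, hVs_ev, rfl⟩, hU⟩ :=
    exists_subset_of_isOpen_addTopologyOf ⟨_, univ_mem_mixedBasic K q⟩
      (directedOn_mixedBasic K (Nat.le_of_lt hq)) hopen (fun i => by simp)
  obtain ⟨x, hx⟩ := NormedField.exists_one_lt_norm K
  obtain ⟨n, hn⟩ := pow_unbounded_of_one_lt ‖x‖ (by exact_mod_cast hq : (1 : ℝ) < q)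
  obtain ⟨i₀, hi₀⟩ := hVs_ev (-n)
  have hxt : ∀ j, (x • mixedT K i₀).1 j = if j = i₀ then x else 0 := fun j => by
    change x * _ = _
    split_ifs <;> simp [mixedT, *]
  have hmem : x • mixedT K i₀ ∈ {f : Mt K | ∀ i, f.1 i ∈ Vs i} := fun j => by
    rw [hxt]
    split_ifs with h
    · exact hi₀ j h.ge (by simpa using hn.le)
    · exact (hVs j).2
  have hle : ‖x‖ ≤ 1 := by simpa [hxt] using hU hmem i₀
  exact hle.not_gt hx

/-- `K{{t}}` with the higher topology is not barrelled: the ring of integers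
`𝒪{{t}} = Σ_{i∈ℤ} 𝒪 t^i` is an `𝒪`-lattice in `K{{t}}` which is closed for the higher
topology but not open. -/
theorem statement6 (q : ℕ) (hK : IsCharZeroLocalField K q) :
    IsLatticeSet K (mixedIntegers K) ∧
    IsClosed[mixedTop K q] (mixedIntegers K) ∧
    ¬ IsOpen[mixedTop K q] (mixedIntegers K) ∧
    ¬ (∀ Λ : Set (Mt K), IsLatticeSet K Λ → IsClosed[mixedTop K q] Λ →
        IsOpen[mixedTop K q] Λ) := by
  have := IsUltrametricDist.isUltrametricDist_of_forall_norm_add_le_max_norm hK.nonarch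
  have hnotOpen := not_isOpen_mixedIntegers K hK.one_lt_q
  exact ⟨isLatticeSet_mixedIntegers K, isClosed_mixedIntegers K q, hnotOpen,
    fun hbarrelled => hnotOpen <|
      hbarrelled _ (isLatticeSet_mixedIntegers K) (isClosed_mixedIntegers K q)⟩

end TwoDimLF
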